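/- arXiv:1203.6380 — 6 statements merged into one kernel-verified Lean document; each statement's English description precedes it below -/
import Mathlib

section
/- Let k and ℓ be positive integers with gcd(ℓ, k²+1) = 1, and let d be a positive divisor of k²+1. Then the positive integers x = k + ℓ·((k²+1)/d) and y = kℓ + d satisfy arctan(1/x) + arctan(ℓ/y) = arctan(1/k), and moreover gcd(ℓ, y) = 1. -/
theorem stmt_0 (k ℓ d : ℕ) (hk : 0 < k) (hl : 0 < ℓ) (hd : 0 < d)
    (hgcd : Nat.gcd ℓ (k ^ 2 + 1) = 1) (hdvd : d ∣ k ^ 2 + 1) :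
    Real.arctan (1 / ((k + ℓ * ((k ^ 2 + 1) / d) : ℕ) : ℝ)) +
      Real.arctan ((ℓ : ℝ) / ((k * ℓ + d : ℕ) : ℝ)) = Real.arctan (1 / (k : ℝ)) ∧
    Nat.gcd ℓ (k * ℓ + d) = 1 := by
  obtain ⟨e, he⟩ := hdvd
  have hdiv : (k ^ 2 + 1) / d = e := by
    rw [he, Nat.mul_div_cancel_left _ hd]
  have he' : 0 < e := by
    rcases Nat.eq_zero_or_pos e with h | h
    · simp [h] at he
    · exact h
  have hcop : Nat.Coprime ℓ d := (Nat.coprime_iff_gcd_eq_one.mpr hgcd).coprime_dvd_right ⟨e, he⟩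
  have hgcd2 : Nat.gcd ℓ (k * ℓ + d) = 1 := by
    rw [show k * ℓ + d = d + k * ℓ by ring, Nat.gcd_add_mul_right_right]
    exact hcop
  refine ⟨?_, hgcd2⟩
  rw [hdiv]
  -- real variables
  have hkR : (0:ℝ) < (k:ℝ) := by exact_mod_cast hk
  have hlR : (0:ℝ) < (ℓ:ℝ) := by exact_mod_cast hl
  have hdR : (0:ℝ) < (d:ℝ) := by exact_mod_cast hd
  have heR : (0:ℝ) < (e:ℝ) := by exact_mod_cast he'
  have heq : (k:ℝ) ^ 2 + 1 = (d:ℝ) * (e:ℝ) := by exact_mod_cast he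
  have hxR : (0:ℝ) < ((k + ℓ * e : ℕ) : ℝ) := by
    push_cast; positivity
  have hyR : (0:ℝ) < ((k * ℓ + d : ℕ) : ℝ) := by
    push_cast; positivity
  set X : ℝ := ((k + ℓ * e : ℕ) : ℝ) with hX
  set Y : ℝ := ((k * ℓ + d : ℕ) : ℝ) with hY
  have hXv : X = (k:ℝ) + (ℓ:ℝ) * (e:ℝ) := by rw [hX]; push_cast; ring
  have hYv : Y = (k:ℝ) * (ℓ:ℝ) + (d:ℝ) := by rw [hY]; push_cast; ring
  have hmul : (1 / X) * ((ℓ:ℝ) / Y) < 1 := by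
    rw [div_mul_div_comm, one_mul, div_lt_one (by positivity)]
    rw [hXv, hYv]
    nlinarith [mul_pos hkR hlR, mul_pos hlR heR, mul_pos hdR heR]
  rw [Real.arctan_add hmul]
  congr 1
  have h1 : (0:ℝ) < 1 - 1 / X * ((ℓ:ℝ) / Y) := by linarith
  have heRv : (e:ℝ) = ((k:ℝ)^2 + 1) / (d:ℝ) := by
    rw [eq_div_iff hdR.ne']
    linarith [heq]
  rw [div_eq_div_iff h1.ne' hkR.ne', hXv, hYv, heRv]
  field_simp
  ring
end

section
/- Let k and ℓ be positive integers with gcd(ℓ, k²+1) = 1. If x and y are positive integers with gcd(ℓ, y) = 1 satisfying arctan(1/x) + arctan(ℓ/y) = arctan(1/k), then there exists a positive divisor d of k²+1 such that x = k + ℓ·((k²+1)/d) and y = kℓ + d. -/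
theorem stmt_1 (k ℓ x y : ℕ) (hk : 0 < k) (hl : 0 < ℓ) (hx : 0 < x) (hy : 0 < y)
    (hgcd : Nat.gcd ℓ (k ^ 2 + 1) = 1) (hgcdy : Nat.gcd ℓ y = 1)
    (heq : Real.arctan (1 / (x : ℝ)) + Real.arctan ((ℓ : ℝ) / (y : ℝ)) =
      Real.arctan (1 / (k : ℝ))) :
    ∃ d : ℕ, 0 < d ∧ d ∣ k ^ 2 + 1 ∧ x = k + ℓ * ((k ^ 2 + 1) / d) ∧ y = k * ℓ + d := by
  have keyN : k * (y + ℓ * x) + ℓ = x * y := by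
    have hkR : (0:ℝ) < k := by exact_mod_cast hk
    have hlR : (0:ℝ) < ℓ := by exact_mod_cast hl
    have hxR : (0:ℝ) < x := by exact_mod_cast hx
    have hyR : (0:ℝ) < y := by exact_mod_cast hy
    set a : ℝ := 1 / (x:ℝ) with ha
    set b : ℝ := (ℓ:ℝ) / (y:ℝ) with hb
    have haP : 0 < a := by positivity
    have hbP : 0 < b := by positivity
    have hab : a * b < 1 := by
      by_contra h
      push_neg at h
      have h0 : a * a⁻¹ = 1 := mul_inv_cancel₀ haP.ne'
      have hba : a⁻¹ ≤ b := by nlinarith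
      have h1 : Real.arctan a⁻¹ ≤ Real.arctan b := Real.arctan_strictMono.monotone hba
      rw [Real.arctan_inv_of_pos haP] at h1
      have h2 : Real.arctan (1 / (k:ℝ)) < Real.pi / 2 := Real.arctan_lt_pi_div_two _
      linarith
    have hadd := Real.arctan_add hab
    rw [heq] at hadd
    have hinj := Real.arctan_injective hadd.symm
    have hne : 1 - a * b ≠ 0 := by nlinarith
    rw [div_eq_div_iff hne (ne_of_gt hkR)] at hinj
    rw [ha, hb] at hinj
    have key : (k:ℝ) * (y + ℓ * x) + ℓ = x * y := by
      field_simp at hinj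
      nlinarith [hinj]
    exact_mod_cast key
  clear heq
  have hxk : k < x := by
    by_contra hcon; push_neg at hcon
    have h2 : x * y ≤ k * y := Nat.mul_le_mul_right y hcon
    zify at keyN h2
    have h3 : (0:ℤ) ≤ (k:ℤ) * ℓ * x := by positivity
    have h4 : (1:ℤ) ≤ (ℓ:ℤ) := by exact_mod_cast hl
    linarith [keyN, h2, h3, h4]
  obtain ⟨t, htP, rfl⟩ : ∃ t, 0 < t ∧ x = k + t := ⟨x - k, by omega, by omega⟩
  have hyt : y * t = ℓ * (k ^ 2 + 1) + k * ℓ * t := by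
    zify at keyN ⊢; linear_combination -keyN
  have hykl : k * ℓ < y := by
    by_contra hcon; push_neg at hcon
    have h2 : y * t ≤ k * ℓ * t := Nat.mul_le_mul_right t hcon
    have h3 : 0 < ℓ * (k ^ 2 + 1) := by positivity
    nlinarith [hyt]
  obtain ⟨d, hdP, rfl⟩ : ∃ d, 0 < d ∧ y = k * ℓ + d := ⟨y - k * ℓ, by omega, by omega⟩
  have hdt : d * t = ℓ * (k ^ 2 + 1) := by
    zify at hyt ⊢; linear_combination hyt
  have hcop : Nat.Coprime ℓ d := by
    have h1 : Nat.Coprime ℓ (d + ℓ * k) := by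
      have h2 : k * ℓ + d = d + ℓ * k := by ring
      unfold Nat.Coprime
      rw [← h2]; exact hgcdy
    exact (Nat.coprime_add_mul_left_right ℓ d k).mp h1
  have hldvd : ℓ ∣ t := by
    have h1 : ℓ ∣ d * t := hdt ▸ Dvd.intro _ rfl
    exact Nat.Coprime.dvd_of_dvd_mul_left hcop h1
  obtain ⟨s, hs⟩ := hldvd
  have hds : d * s = k ^ 2 + 1 := by
    have h1 : ℓ * (d * s) = ℓ * (k ^ 2 + 1) := by rw [← hdt, hs]; ring
    exact Nat.eq_of_mul_eq_mul_left hl h1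
  refine ⟨d, hdP, ⟨s, hds.symm⟩, ?_, rfl⟩
  have hsval : (k ^ 2 + 1) / d = s := by
    rw [← hds]; exact Nat.mul_div_cancel_left s hdP
  rw [hsval, hs]
end

section
/- Let k and ℓ be positive integers with gcd(ℓ, k²+1) = 1. The set of pairs (x, y) of positive integers with gcd(ℓ, y) = 1 satisfying arctan(1/x) + arctan(ℓ/y) = arctan(1/k) has exactly N elements, where N is the number of positive divisors of k²+1. -/
open Real

private lemma arctan_eq_iff_nat (k ℓ x y : ℕ) (hk : 0 < k) (hl : 0 < ℓ) (hx : 0 < x)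
    (hy : 0 < y) :
    Real.arctan (1 / (x : ℝ)) + Real.arctan ((ℓ : ℝ) / (y : ℝ)) = Real.arctan (1 / (k : ℝ)) ↔
    x * y = k * y + k * ℓ * x + ℓ := by
  have hkR : (0:ℝ) < k := by exact_mod_cast hk
  have hlR : (0:ℝ) < ℓ := by exact_mod_cast hl
  have hxR : (0:ℝ) < x := by exact_mod_cast hx
  have hyR : (0:ℝ) < y := by exact_mod_cast hy
  have h1k : (1:ℝ) ≤ k := by exact_mod_cast hk
  have h1l : (1:ℝ) ≤ ℓ := by exact_mod_cast hl
  have h1x : (1:ℝ) ≤ x := by exact_mod_cast hx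
  have h1y : (1:ℝ) ≤ y := by exact_mod_cast hy
  constructor
  · intro h
    have hb0 : (0:ℝ) < Real.arctan ((ℓ:ℝ)/(y:ℝ)) := by
      have := Real.arctan_strictMono (show (0:ℝ) < (ℓ:ℝ)/(y:ℝ) by positivity)
      simpa using this
    have ha0 : (0:ℝ) < Real.arctan (1/(x:ℝ)) := by
      have := Real.arctan_strictMono (show (0:ℝ) < 1/(x:ℝ) by positivity)
      simpa using this
    have h1 : 1/(x:ℝ) < 1/(k:ℝ) := by
      have : Real.arctan (1/(x:ℝ)) < Real.arctan (1/(k:ℝ)) := by linarith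
      exact Real.arctan_strictMono.lt_iff_lt.mp this
    have h2 : (ℓ:ℝ)/(y:ℝ) < 1/(k:ℝ) := by
      have : Real.arctan ((ℓ:ℝ)/(y:ℝ)) < Real.arctan (1/(k:ℝ)) := by linarith
      exact Real.arctan_strictMono.lt_iff_lt.mp this
    have hkx : (k:ℝ) < x := by
      rwa [div_lt_div_iff₀ hxR hkR, one_mul, one_mul] at h1
    have hky : (ℓ:ℝ) * k < y := by
      rwa [div_lt_div_iff₀ hyR hkR, one_mul] at h2
    have hlxy : (ℓ:ℝ) < x * y := by nlinarith
    have hab : (1/(x:ℝ)) * ((ℓ:ℝ)/(y:ℝ)) < 1 := by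
      rw [div_mul_div_comm, div_lt_one (by positivity), one_mul]
      exact hlxy
    rw [Real.arctan_add hab] at h
    have h3 := Real.arctan_injective h
    rw [div_eq_div_iff] at h3
    · have hgoal : (x:ℝ) * y = k * y + k * ℓ * x + ℓ := by
        field_simp at h3
        nlinarith [h3]
      exact_mod_cast hgoal
    · rw [div_mul_div_comm, one_mul]
      rw [div_mul_div_comm, one_mul] at hab
      exact sub_ne_zero.mpr hab.ne'
    · exact hkR.ne'
  · intro h
    have hR : (x:ℝ) * y = k * y + k * ℓ * x + ℓ := by exact_mod_cast h
    have hlxy : (ℓ:ℝ) < x * y := by nlinarith [mul_pos hkR hyR, mul_pos (mul_pos hkR hlR) hxR]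
    have hab : (1/(x:ℝ)) * ((ℓ:ℝ)/(y:ℝ)) < 1 := by
      rw [div_mul_div_comm, div_lt_one (by positivity), one_mul]
      exact hlxy
    rw [Real.arctan_add hab]
    congr 1
    rw [div_eq_div_iff]
    · field_simp
      nlinarith [hR]
    · have h6 : (ℓ:ℝ)/((x:ℝ)*(y:ℝ)) < 1 := by
        rw [div_lt_one (by positivity)]; exact hlxy
      rw [div_mul_div_comm, one_mul]
      exact sub_ne_zero.mpr h6.ne'
    · exact hkR.ne'

theorem stmt_2 (k ℓ : ℕ) (hk : 0 < k) (hl : 0 < ℓ)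
    (hgcd : Nat.gcd ℓ (k ^ 2 + 1) = 1) :
    {p : ℕ × ℕ | 0 < p.1 ∧ 0 < p.2 ∧ Nat.gcd ℓ p.2 = 1 ∧
        Real.arctan (1 / (p.1 : ℝ)) + Real.arctan ((ℓ : ℝ) / (p.2 : ℝ)) =
          Real.arctan (1 / (k : ℝ))}.ncard = (Nat.divisors (k ^ 2 + 1)).card := by
  set m := k ^ 2 + 1 with hm
  have hm0 : 0 < m := by positivity
  set f : ℕ → ℕ × ℕ := fun d => (k + ℓ * d, k * ℓ + m / d) with hf
  have hset : {p : ℕ × ℕ | 0 < p.1 ∧ 0 < p.2 ∧ Nat.gcd ℓ p.2 = 1 ∧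
        Real.arctan (1 / (p.1 : ℝ)) + Real.arctan ((ℓ : ℝ) / (p.2 : ℝ)) =
          Real.arctan (1 / (k : ℝ))} = f '' (Nat.divisors m : Set ℕ) := by
    ext ⟨x, y⟩
    simp only [Set.mem_setOf_eq, Set.mem_image, Finset.coe_sort_coe, Finset.mem_coe,
      Nat.mem_divisors]
    constructor
    · rintro ⟨hx, hy, hgy, heq⟩
      rw [arctan_eq_iff_nat k ℓ x y hk hl hx hy] at heq
      have hkx : k < x := by
        by_contra hc
        push_neg at hc
        have h1 : x * y ≤ k * y := Nat.mul_le_mul_right y hc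
        have h2 : 0 < k * ℓ * x := Nat.mul_pos (Nat.mul_pos hk hl) hx
        omega
      have hky : k * ℓ < y := by
        by_contra hc
        push_neg at hc
        have h1 : x * y ≤ x * (k * ℓ) := Nat.mul_le_mul_left x hc
        have h2 : x * (k * ℓ) = k * ℓ * x := by ring
        have h3 : 0 < k * y := Nat.mul_pos hk hy
        omega
      obtain ⟨a, hxa, ha0⟩ : ∃ a, x = k + a ∧ 0 < a := ⟨x - k, by omega, by omega⟩
      obtain ⟨b, hyb, hb0⟩ : ∃ b, y = k * ℓ + b ∧ 0 < b := ⟨y - k * ℓ, by omega, by omega⟩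
      have hE : (k + a) * (k * ℓ + b) = k * (k * ℓ + b) + k * ℓ * (k + a) + ℓ := by
        rw [← hxa, ← hyb]; exact heq
      have hEz : ((k:ℤ) + a) * (k * ℓ + b) = k * (k * ℓ + b) + k * ℓ * (k + a) + ℓ := by
        exact_mod_cast hE
      have habz : (a:ℤ) * b = ℓ * ((k:ℤ) ^ 2 + 1) := by linear_combination hEz
      have hab : a * b = ℓ * m := by
        rw [hm]; exact_mod_cast habz
      have hcb : Nat.gcd ℓ b = 1 := by
        have h5 : Nat.gcd ℓ (b + ℓ * k) = Nat.gcd ℓ b := Nat.gcd_add_mul_left_right ℓ b k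
        rw [hyb, show k * ℓ + b = b + ℓ * k by ring] at hgy
        rw [← h5]; exact hgy
      have hdvd : ℓ ∣ a := by
        have h1 : ℓ ∣ a * b := hab ▸ Dvd.intro m rfl
        exact Nat.Coprime.dvd_of_dvd_mul_right hcb h1
      obtain ⟨d, hd⟩ := hdvd
      have hd0 : 0 < d := by
        rcases Nat.eq_zero_or_pos d with h0 | h0
        · rw [h0, Nat.mul_zero] at hd; omega
        · exact h0
      have hdb : d * b = m := by
        have : ℓ * (d * b) = ℓ * m := by rw [← hab, hd]; ring
        exact Nat.eq_of_mul_eq_mul_left hl this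
      refine ⟨d, ⟨⟨b, hdb.symm⟩, hm0.ne'⟩, ?_⟩
      have hmd : m / d = b := by rw [← hdb, Nat.mul_div_cancel_left _ hd0]
      show (k + ℓ * d, k * ℓ + m / d) = (x, y)
      rw [hmd, Prod.mk.injEq]
      exact ⟨by rw [hxa, hd], by rw [hyb]⟩
    · rintro ⟨d, ⟨hdvd, _⟩, hfd⟩
      have hd0 : 0 < d := Nat.pos_of_dvd_of_pos hdvd hm0
      have hde : d * (m / d) = m := Nat.mul_div_cancel' hdvd
      set e := m / d with he
      have he0 : 0 < e := by
        rcases Nat.eq_zero_or_pos e with h0 | h0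
        · rw [h0, Nat.mul_zero] at hde; omega
        · exact h0
      have hfd' : k + ℓ * d = x ∧ k * ℓ + e = y := by
        rw [Prod.ext_iff] at hfd
        exact hfd
      obtain ⟨hx, hy⟩ := hfd'
      have hxpos : 0 < x := by omega
      have hypos : 0 < y := by
        rw [← hy]
        exact Nat.add_pos_right _ he0
      have hgy : Nat.gcd ℓ y = 1 := by
        have hce : Nat.Coprime ℓ e :=
          Nat.Coprime.coprime_dvd_right (Dvd.intro_left d hde) hgcd
        have h5 : Nat.gcd ℓ (e + ℓ * k) = Nat.gcd ℓ e := Nat.gcd_add_mul_left_right ℓ e k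
        rw [← hy, show k * ℓ + e = e + ℓ * k by ring, h5]
        exact hce
      refine ⟨hxpos, hypos, hgy, ?_⟩
      rw [arctan_eq_iff_nat k ℓ x y hk hl hxpos hypos]
      rw [← hx, ← hy]
      have hdez : (d:ℤ) * e = (k:ℤ) ^ 2 + 1 := by
        have : d * e = k ^ 2 + 1 := by rw [hde, hm]
        exact_mod_cast this
      have : ((k:ℤ) + ℓ * d) * (k * ℓ + e) =
          k * (k * ℓ + e) + k * ℓ * (k + ℓ * d) + ℓ := by
        linear_combination (ℓ : ℤ) * hdez
      exact_mod_cast this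
  rw [hset]
  rw [Set.ncard_image_of_injOn, Set.ncard_coe_finset]
  intro d1 _ d2 _ h
  simp only [hf, Prod.mk.injEq] at h
  have h1 : ℓ * d1 = ℓ * d2 := Nat.add_left_cancel h.1
  exact Nat.eq_of_mul_eq_mul_left hl h1
end

section
/- Let k and ℓ be positive integers with gcd(ℓ, k²+1) = 1, and suppose k²+1 is a prime number. Then the set of pairs (x, y) of positive integers with gcd(ℓ, y) = 1 satisfying arctan(1/x) + arctan(ℓ/y) = arctan(1/k) consists of exactly the two pairs (k + ℓ(k²+1), kℓ + 1) and (k + ℓ, kℓ + k² + 1). -/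
open Real

lemma key_arctan (k ℓ x y : ℕ) (hk : 0 < k) (hl : 0 < ℓ) (hx : 0 < x) (hy : 0 < y)
    (h : x * y = k * y + ℓ + k * ℓ * x) :
    Real.arctan (1 / (x : ℝ)) + Real.arctan ((ℓ : ℝ) / (y : ℝ)) = Real.arctan (1 / (k : ℝ)) := by
  have hxR : (0:ℝ) < x := by exact_mod_cast hx
  have hyR : (0:ℝ) < y := by exact_mod_cast hy
  have hkR : (0:ℝ) < k := by exact_mod_cast hk
  have hlR : (0:ℝ) < ℓ := by exact_mod_cast hl
  have hR : (x:ℝ) * y = k * y + ℓ + k * ℓ * x := by exact_mod_cast h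
  have hlt : (ℓ:ℝ) < x * y := by nlinarith [mul_pos hkR hyR, mul_pos (mul_pos hkR hlR) hxR]
  have hprod : (1 / (x:ℝ)) * ((ℓ:ℝ) / y) < 1 := by
    rw [div_mul_div_comm, div_lt_one (by positivity)]
    linarith
  rw [Real.arctan_add hprod]
  congr 1
  have hne : (x:ℝ) * y - ℓ ≠ 0 := by nlinarith
  field_simp
  nlinarith [hR]

theorem stmt_3 (k ℓ : ℕ) (hk : 0 < k) (hl : 0 < ℓ)
    (hgcd : Nat.gcd ℓ (k ^ 2 + 1) = 1) (hp : Nat.Prime (k ^ 2 + 1)) :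
    {p : ℕ × ℕ | 0 < p.1 ∧ 0 < p.2 ∧ Nat.gcd ℓ p.2 = 1 ∧
        Real.arctan (1 / (p.1 : ℝ)) + Real.arctan ((ℓ : ℝ) / (p.2 : ℝ)) =
          Real.arctan (1 / (k : ℝ))} =
      {(k + ℓ * (k ^ 2 + 1), k * ℓ + 1), (k + ℓ, k * ℓ + k ^ 2 + 1)} := by
  ext ⟨x, y⟩
  simp only [Set.mem_setOf_eq, Set.mem_insert_iff, Set.mem_singleton_iff, Prod.mk.injEq]
  constructor
  · rintro ⟨hx, hy, hg, heq⟩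
    -- derive the algebraic equation
    have hxR : (0:ℝ) < x := by exact_mod_cast hx
    have hyR : (0:ℝ) < y := by exact_mod_cast hy
    have hkR : (0:ℝ) < k := by exact_mod_cast hk
    have hlR : (0:ℝ) < ℓ := by exact_mod_cast hl
    have hax : 0 < Real.arctan (1 / (x:ℝ)) := by
      have := Real.arctan_strictMono (show (0:ℝ) < 1 / x by positivity)
      simpa using this
    have h1 : Real.arctan ((ℓ:ℝ) / y) < Real.arctan (1 / (k:ℝ)) := by linarith
    have h2 : (ℓ:ℝ) / y < 1 / k := Real.arctan_strictMono.lt_iff_lt.mp h1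
    have hk1 : (1:ℝ) / k ≤ 1 := by
      rw [div_le_one hkR]; exact_mod_cast hk
    have hx1 : (1:ℝ) / x ≤ 1 := by
      rw [div_le_one hxR]; exact_mod_cast hx
    have hly : (ℓ:ℝ) / y < 1 := lt_of_lt_of_le h2 hk1
    have hprod : (1 / (x:ℝ)) * ((ℓ:ℝ) / y) < 1 := by
      have h0 : (0:ℝ) ≤ (ℓ:ℝ) / y := by positivity
      nlinarith [div_pos (show (0:ℝ) < 1 by norm_num) hxR]
    rw [Real.arctan_add hprod] at heq
    have hfrac := Real.arctan_injective heq
    have hx1R : (1:ℝ) ≤ x := by exact_mod_cast hx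
    have hlt : (ℓ:ℝ) < x * y := by
      rw [div_lt_one hyR] at hly
      nlinarith [mul_le_mul_of_nonneg_right hx1R hyR.le]
    have hne : (x:ℝ) * y - ℓ ≠ 0 := by nlinarith
    have hden : (0:ℝ) < 1 - 1 / x * ((ℓ:ℝ) / y) := by linarith
    have hkey : (x:ℝ) * y = k * y + ℓ + k * ℓ * x := by
      rw [div_eq_div_iff hden.ne' hkR.ne'] at hfrac
      field_simp at hfrac
      linarith [hfrac]
    have hN : x * y = k * y + ℓ + k * ℓ * x := by exact_mod_cast hkey
    -- number theory
    have hyk : k * ℓ < y := by nlinarith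
    set d := y - k * ℓ with hddef
    have hd : y = k * ℓ + d := by omega
    have hdpos : 0 < d := by omega
    have hEq : x * d = k * d + ℓ * (k ^ 2 + 1) := by
      have h' := hN
      rw [hd] at h'
      zify at h' ⊢
      linear_combination h'
    have hxk : k < x := by
      have hL : 0 < ℓ * (k ^ 2 + 1) := by positivity
      have : k * d < x * d := by omega
      exact Nat.lt_of_mul_lt_mul_right this
    have hfac : (x - k) * d = ℓ * (k ^ 2 + 1) := by
      rw [Nat.sub_mul, hEq, Nat.add_sub_cancel_left]
    have hco : Nat.Coprime ℓ d := by
      have hg' := hg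
      rw [hd, add_comm, Nat.gcd_add_mul_right_right] at hg'
      exact hg'
    have hdvd : d ∣ k ^ 2 + 1 := by
      refine hco.symm.dvd_of_dvd_mul_left ⟨x - k, ?_⟩
      rw [← hfac]; ring
    rcases (hp.eq_one_or_self_of_dvd d hdvd) with h1' | h1'
    · left
      have hx' : x - k = ℓ * (k ^ 2 + 1) := by simpa [h1'] using hfac
      constructor
      · rw [← hx']
        exact (Nat.add_sub_cancel' hxk.le).symm
      · rw [hd, h1']
    · right
      rw [h1'] at hfac
      have hx' : x - k = ℓ :=
        Nat.eq_of_mul_eq_mul_right (show 0 < k ^ 2 + 1 by positivity) hfac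
      constructor
      · omega
      · rw [hd, h1']; ring
  · rintro (⟨hx', hy'⟩ | ⟨hx', hy'⟩) <;> subst hx' <;> subst hy'
    · refine ⟨by positivity, by positivity, ?_, ?_⟩
      · rw [add_comm, Nat.gcd_add_mul_right_right]
        simp
      · apply key_arctan k ℓ _ _ hk hl (by positivity) (by positivity)
        ring
    · refine ⟨by positivity, by positivity, ?_, ?_⟩
      · have : k * ℓ + k ^ 2 + 1 = (k ^ 2 + 1) + k * ℓ := by ring
        rw [this, Nat.gcd_add_mul_right_right]
        exact hgcd
      · apply key_arctan k ℓ _ _ hk hl (by positivity) (by positivity)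
        ring
end

section
/- Let k, ℓ, x, y be positive integers such that arctan(1/x) + arctan(ℓ/y) = arctan(1/k). Then (as an identity of integers) y·(x − k) = ℓ·(1 + k·x); in particular x > k. -/
theorem stmt_6 (k ℓ x y : ℕ) (hk : 0 < k) (hl : 0 < ℓ) (hx : 0 < x) (hy : 0 < y)
    (heq : Real.arctan (1 / (x : ℝ)) + Real.arctan ((ℓ : ℝ) / (y : ℝ)) =
      Real.arctan (1 / (k : ℝ))) :
    k < x ∧ y * (x - k) = ℓ * (1 + k * x) := by
  have hxR : (0:ℝ) < x := by exact_mod_cast hx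
  have hyR : (0:ℝ) < y := by exact_mod_cast hy
  have hkR : (0:ℝ) < k := by exact_mod_cast hk
  have hlR : (0:ℝ) < ℓ := by exact_mod_cast hl
  -- arctan(ℓ/y) < arctan(1/k)
  have h1 : Real.arctan ((ℓ:ℝ)/y) < Real.arctan (1/(k:ℝ)) := by
    have : Real.arctan 0 < Real.arctan (1/(x:ℝ)) := Real.arctan_strictMono (by positivity)
    rw [Real.arctan_zero] at this
    linarith
  have hlt : (ℓ:ℝ)/y < 1/(k:ℝ)  := Real.arctan_strictMono.lt_iff_lt.mp h1
  have hx1 : (1:ℝ)/(x:ℝ) ≤ 1 := by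
    rw [div_le_one hxR]; exact_mod_cast hx
  have hk1 : (1:ℝ)/(k:ℝ) ≤ 1 := by
    rw [div_le_one hkR]; exact_mod_cast hk
  have hmul : (1/(x:ℝ)) * ((ℓ:ℝ)/y) < 1 := by
    have h2 : (ℓ:ℝ)/y < 1 := lt_of_lt_of_le hlt hk1
    nlinarith [div_pos hlR hyR, div_pos (one_pos) hxR]
  rw [Real.arctan_add hmul] at heq
  have key : (1/(x:ℝ) + (ℓ:ℝ)/y) / (1 - (1/(x:ℝ)) * ((ℓ:ℝ)/y)) = 1/(k:ℝ) :=
    Real.arctan_injective heq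
  have hne : (1 - (1/(x:ℝ)) * ((ℓ:ℝ)/y)) ≠ 0 := by linarith
  have keyR : (y:ℝ) * ((x:ℝ) - k) = ℓ * (1 + k * x) := by
    have h2 : (ℓ:ℝ)/((x:ℝ)*y) < 1 := by
      rw [show (ℓ:ℝ)/((x:ℝ)*y) = 1/(x:ℝ) * ((ℓ:ℝ)/y) by ring]; exact hmul
    have hprod : (ℓ:ℝ) < (x:ℝ)*y := (div_lt_one (mul_pos hxR hyR)).mp h2
    field_simp at key
    rw [div_eq_one_iff_eq (sub_pos.mpr hprod).ne'] at key
    nlinarith [key]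
  have hklt : k < x := by
    have hpos : (0:ℝ) < (ℓ:ℝ) * (1 + k * x) := by positivity
    have : (0:ℝ) < (x:ℝ) - k := by nlinarith
    have : (k:ℝ) < x := by linarith
    exact_mod_cast this
  refine ⟨hklt, ?_⟩
  have : ((y * (x - k) : ℕ) : ℝ) = ((ℓ * (1 + k * x) : ℕ) : ℝ) := by
    push_cast [Nat.cast_sub hklt.le]
    linarith [keyR]
  exact_mod_cast this
end

section
/- For all positive integers k and ℓ, arctan(1/(k + ℓ(k²+1))) + arctan(ℓ/(kℓ + 1)) = arctan(1/k). -/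
theorem stmt_7 (k ℓ : ℕ) (hk : 0 < k) (hl : 0 < ℓ) :
    Real.arctan (1 / ((k : ℝ) + ℓ * (k ^ 2 + 1))) +
      Real.arctan ((ℓ : ℝ) / ((k : ℝ) * ℓ + 1)) = Real.arctan (1 / (k : ℝ)) := by
  have hk' : (1 : ℝ) ≤ k := by exact_mod_cast hk
  have hl' : (1 : ℝ) ≤ ℓ := by exact_mod_cast hl
  have hk0 : (0 : ℝ) < k := by linarith
  have hl0 : (0 : ℝ) < ℓ := by linarith
  have hA : (0 : ℝ) < (k : ℝ) + ℓ * (k ^ 2 + 1) := by nlinarith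
  have hB : (0 : ℝ) < (k : ℝ) * ℓ + 1 := by nlinarith
  have h : (1 / ((k : ℝ) + ℓ * (k ^ 2 + 1))) * ((ℓ : ℝ) / ((k : ℝ) * ℓ + 1)) < 1 := by
    rw [div_mul_div_comm, div_lt_one (by positivity)]
    nlinarith [mul_pos hk0 hl0, mul_pos (mul_pos hk0 hk0) hl0, mul_pos (mul_pos hk0 hl0) hl0]
  rw [Real.arctan_add h]
  congr 1
  have hD : (0:ℝ) < 1 - (1 / ((k : ℝ) + ℓ * (k ^ 2 + 1))) * ((ℓ : ℝ) / ((k : ℝ) * ℓ + 1)) := by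
    linarith
  rw [div_eq_div_iff hD.ne' hk0.ne']
  field_simp
  ring
end
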